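/- arXiv:1808.05295 — 2 statements merged into one kernel-verified Lean document; each statement's English description precedes it below -/
import Mathlib

section
/- Let B < 0 and C, z, K ∈ ℝ with K > 0 and z = (C − ln K)/B. For ξ ∈ ℂ with Im ξ > −B, the Fourier transform of the call payoff satisfies ∫_ℝ e^{−irξ}(e^{Br + C} − K)₊ dr = K·B·e^{izξ}/(ξ(ξ + iB)). -/
/-!
The payoff vanishes exactly to the right of the log-strike `t = (log K - C) / B`, where
`e^{Bt + C} = K`. On `(-∞, t]` the integrand is a combination of the two exponentials
`e^{(B - iξ) r}` and `e^{-iξ r}`, both integrable there because `Im ξ > -B > 0`, and integrating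
them and using `e^{Bt + C} = K` at the boundary collapses the result to a single term.
-/

open Complex Real MeasureTheory Set

theorem max_exp_sub_zero_eq_indicator_Iic {B C K : ℝ} (hB : B < 0) (hK : 0 < K) (r : ℝ) :
    max (rexp (B * r + C) - K) 0
      = (Iic ((Real.log K - C) / B)).indicator (fun r ↦ rexp (B * r + C) - K) r := by
  have hitm : r ≤ (Real.log K - C) / B ↔ K ≤ rexp (B * r + C) := by
    rw [le_div_iff_of_neg' hB, sub_le_iff_le_add, ← Real.exp_le_exp, Real.exp_log hK]
  by_cases hr : r ≤ (Real.log K - C) / B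
  · rw [indicator_of_mem (mem_Iic.mpr hr), max_eq_left (sub_nonneg.mpr (hitm.mp hr))]
  · rw [indicator_of_notMem (mt mem_Iic.mp hr),
      max_eq_right (sub_nonpos.mpr (not_le.mp (hitm.not.mp hr)).le)]

theorem integral_Iic_cexp_mul_mul_cexp_sub {a b c K : ℂ} (hb : 0 < b.re) (hab : 0 < (a + b).re)
    {t : ℝ} (ht : cexp (a * t + c) = K) :
    ∫ r : ℝ in Iic t, cexp (b * r) * (cexp (a * r + c) - K)
      = -(K * a * cexp (b * t) / (b * (a + b))) := by
  have hb0 : b ≠ 0 := fun h ↦ by simp only [h, zero_re, lt_irrefl] at hb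
  have hab0 : a + b ≠ 0 := fun h ↦ by simp only [h, zero_re, lt_irrefl] at hab
  have hsplit : ∀ r : ℂ, cexp (b * r) * (cexp (a * r + c) - K)
      = cexp c * cexp ((a + b) * r) - K * cexp (b * r) := fun r ↦ by
    rw [mul_sub, ← Complex.exp_add, ← Complex.exp_add]; ring_nf
  have hboundary : cexp c * cexp ((a + b) * t) = K * cexp (b * t) := by
    rw [← ht, ← Complex.exp_add, ← Complex.exp_add]; ring_nf
  simp_rw [hsplit]
  rw [integral_sub ((integrableOn_exp_mul_complex_Iic hab t).const_mul _)
      ((integrableOn_exp_mul_complex_Iic hb t).const_mul _),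
    integral_const_mul, integral_const_mul, integral_exp_mul_complex_Iic hab,
    integral_exp_mul_complex_Iic hb, ← mul_div_assoc, hboundary]
  field_simp
  ring

theorem stmt_12 (B C K : ℝ) (hB : B < 0) (hK : 0 < K) (ξ : ℂ) (hξ : -B < ξ.im) :
    (∫ r : ℝ, Complex.exp (-Complex.I * r * ξ) *
        ((max (Real.exp (B * r + C) - K) 0 : ℝ) : ℂ))
      = (K : ℂ) * (B : ℂ) *
          Complex.exp (Complex.I * (((C - Real.log K) / B : ℝ) : ℂ) * ξ) /
          (ξ * (ξ + Complex.I * B)) := by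
  have hintegrand : ∀ r : ℝ, cexp (-I * r * ξ) * ((max (rexp (B * r + C) - K) 0 : ℝ) : ℂ)
      = (Iic ((Real.log K - C) / B)).indicator
          (fun r : ℝ ↦ cexp (-I * ξ * r) * (cexp (B * r + C) - K)) r := fun r ↦ by
    rw [max_exp_sub_zero_eq_indicator_Iic hB hK, indicator_apply, indicator_apply]
    split_ifs <;> push_cast <;> ring_nf
  have hre : 0 < (-I * ξ).re := by
    simp only [neg_mul, neg_re, mul_re, I_re, zero_mul, I_im, one_mul, zero_sub, neg_neg]
    linarith
  have hre' : 0 < (B + -I * ξ).re := by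
    simp only [neg_mul, add_re, ofReal_re, neg_re, mul_re, I_re, zero_mul, I_im, one_mul,
      zero_sub, neg_neg]
    linarith
  have hstrike : cexp (B * ((Real.log K - C) / B : ℝ) + C) = K := by
    rw [← ofReal_mul, ← ofReal_add, ← ofReal_exp, mul_div_cancel₀ _ hB.ne, sub_add_cancel,
      Real.exp_log hK]
  have hphase : -I * ξ * ((Real.log K - C) / B : ℝ) = I * ((C - Real.log K) / B : ℝ) * ξ := by
    push_cast; ring
  have hden : ξ * (ξ + I * B) = -(-I * ξ * (B + -I * ξ)) := by
    ring_nf; rw [I_sq]; ring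
  simp_rw [hintegrand]
  rw [integral_indicator measurableSet_Iic, integral_Iic_cexp_mul_mul_cexp_sub hre hre' hstrike,
    hphase, hden, div_neg]
end

section
/- Let d > 0 and suppose f is analytic on the strip S_{(−d,d)} and satisfies |f(y + ia)| ≤ M·exp(−c·e^{|y|}) for all y ∈ ℝ, a ∈ (−d, d), with constants M, c > 0. Then the Hardy norm H(f, d') = ∫_ℝ |f(y − id')| dy + ∫_ℝ |f(y + id')| dy is finite for every d' ∈ (0, d), and the tail sum ζ Σ_{|j| > N} |f(jζ)| is at most (2M/c)·exp(−c·e^{Nζ}) for any ζ > 0, N ≥ 1. -/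
/-!
Along each horizontal line the bound `M exp(-c e^{|y|})` is dominated by a Gaussian, which gives
the integrability. For the lattice tail, `e^{(N+m)ζ} ≥ e^{Nζ} (1 + mζ)` turns the
double-exponential decay into a geometric one with ratio `q = exp(-c ζ e^{Nζ})`, and
`∑_{m ≥ 1} q^m = 1/(e^{cζe^{Nζ}} - 1)` is at most `1/(c ζ e^{Nζ})`, the discrete analogue of
`∫_0^∞ e^{-xt} dt = 1/x`.
-/

open Complex Real MeasureTheory

lemma integrable_exp_neg_mul_exp_abs {c : ℝ} (hc : 0 < c) :
    Integrable fun y : ℝ => Real.exp (-c * Real.exp |y|) := by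
  refine (integrable_exp_neg_mul_sq (half_pos hc)).mono' (by fun_prop) (ae_of_all _ fun y => ?_)
  rw [norm_of_nonneg (Real.exp_pos _).le, Real.exp_le_exp]
  have := quadratic_le_exp_of_nonneg (abs_nonneg y)
  nlinarith [sq_abs y, abs_nonneg y]

lemma integrable_of_norm_le_exp_neg_mul_exp_abs {E : Type*} [NormedAddCommGroup E] {g : ℝ → E}
    {M c : ℝ} (hc : 0 < c) (hg : AEStronglyMeasurable g)
    (hbound : ∀ y, ‖g y‖ ≤ M * Real.exp (-c * Real.exp |y|)) : Integrable g :=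
  ((integrable_exp_neg_mul_exp_abs hc).const_mul M).mono' hg (ae_of_all _ hbound)

lemma tsum_exp_neg_pow_succ_le {x : ℝ} (hx : 0 < x) :
    ∑' m : ℕ, Real.exp (-x) ^ (m + 1) ≤ x⁻¹ := by
  have hq : Real.exp (-x) < 1 := Real.exp_lt_one_iff.2 (neg_lt_zero.2 hx)
  simp_rw [pow_succ, tsum_mul_right, tsum_geometric_of_lt_one (Real.exp_pos _).le hq]
  rw [← div_eq_inv_mul, div_le_iff₀ (sub_pos.2 hq), inv_mul_eq_div, le_div_iff₀ hx]
  have : Real.exp (-x) * Real.exp x = 1 := by rw [← Real.exp_add]; simp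
  nlinarith [add_one_le_exp x, Real.exp_pos (-x)]

lemma tsum_abs_gt_le_two_mul_tsum {u : ℤ → ℝ} {g : ℕ → ℝ} (N : ℕ) (hu : ∀ j, 0 ≤ u j)
    (hg : Summable g) (hug : ∀ j : ℤ, (N : ℤ) < |j| → u j ≤ g j.natAbs) :
    ∑' j : {j : ℤ // (N : ℤ) < |j|}, u j ≤ 2 * ∑' m : ℕ, g (m + N + 1) := by
  set S := {j : ℤ | (N : ℤ) < |j|}
  set G : ℕ → ℝ := {n | N < n}.indicator g
  have hS : ∀ j : ℤ, j ∈ S ↔ N < j.natAbs := fun j => by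
    simp only [S, Set.mem_ofPred_eq, Int.abs_eq_natAbs]; omega
  have hv : ∀ j : ℤ, S.indicator u j ≤ G j.natAbs := by
    intro j
    by_cases hj : j ∈ S
    · simpa [G, hj, (hS j).1 hj] using hug j hj
    · simp [G, hj, (hS j).not.1 hj]
  have hv0 : ∀ j : ℤ, 0 ≤ S.indicator u j := fun j => Set.indicator_nonneg (fun j _ => hu j) j
  have hG0 : ∀ n, 0 ≤ G n := fun n => (hv0 n).trans (hv n)
  have hG : Summable G := hg.indicator _
  have hpos : Summable fun n : ℕ => S.indicator u n := hG.of_nonneg_of_le (hv0 ·) (hv ·)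
  have hneg : Summable fun n : ℕ => S.indicator u (-(n + 1)) :=
    (hG.comp_injective (add_left_injective 1)).of_nonneg_of_le (fun _ => hv0 _)
      (fun n => hv (-(n + 1)))
  calc ∑' j : S, u j = ∑' j : ℤ, S.indicator u j := tsum_subtype S u
    _ = ∑' n : ℕ, S.indicator u n + ∑' n : ℕ, S.indicator u (-(n + 1)) :=
      tsum_of_nat_of_neg_add_one hpos hneg
    _ ≤ ∑' n, G n + ∑' n, G (n + 1) :=
      add_le_add (hpos.tsum_le_tsum (hv ·) hG)
        (hneg.tsum_le_tsum (fun n => hv (-(n + 1))) (hG.comp_injective (add_left_injective 1)))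
    _ ≤ 2 * ∑' n, G n := by
      rw [← hG.sum_add_tsum_nat_add 1]
      simp only [Finset.range_one, Finset.sum_singleton]
      linarith [hG0 0]
    _ = 2 * ∑' m, g (m + N + 1) := by
      rw [← hG.sum_add_tsum_nat_add (N + 1), Finset.sum_eq_zero fun n hn => ?_]
      · rw [zero_add]
        congr 1
        exact tsum_congr fun m => Set.indicator_of_mem (by simp only [Set.mem_ofPred_eq]; omega) g
      · rw [Finset.mem_range] at hn
        exact Set.indicator_of_notMem (by simp only [Set.mem_ofPred_eq]; omega) g

lemma exp_neg_mul_exp_add_le {c : ℝ} (hc : 0 ≤ c) (x t : ℝ) :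
    Real.exp (-c * Real.exp (x + t)) ≤
      Real.exp (-c * Real.exp x) * Real.exp (-(c * Real.exp x) * t) := by
  rw [← Real.exp_add, Real.exp_le_exp, Real.exp_add]
  nlinarith [add_one_le_exp t, mul_nonneg hc (Real.exp_pos x).le]

lemma mul_tsum_abs_gt_le_of_le_exp_neg_mul_exp {u : ℤ → ℝ} {M c ζ : ℝ} (hM : 0 ≤ M)
    (hc : 0 < c) (hζ : 0 < ζ) (N : ℕ) (hu0 : ∀ j, 0 ≤ u j)
    (hu : ∀ j : ℤ, u j ≤ M * Real.exp (-c * Real.exp |j * ζ|)) :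
    ζ * ∑' j : {j : ℤ // (N : ℤ) < |j|}, u j ≤
      2 * M / (c * Real.exp (N * ζ)) * Real.exp (-c * Real.exp (N * ζ)) := by
  set K := c * Real.exp (N * ζ)
  set E := Real.exp (-c * Real.exp (N * ζ))
  set q := Real.exp (-(K * ζ))
  have hKζ : 0 < K * ζ := by positivity
  have hterm : ∀ j : ℤ, (N : ℤ) < |j| → u j ≤ M * E * q ^ (j.natAbs - N) := by
    intro j hj
    rw [Int.abs_eq_natAbs] at hj
    have habs : |(j : ℝ) * ζ| = N * ζ + ((j.natAbs - N : ℕ) : ℝ) * ζ := by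
      rw [abs_mul, abs_of_pos hζ, Nat.cast_sub (by omega), Nat.cast_natAbs, Int.cast_abs]
      ring
    calc u j ≤ M * Real.exp (-c * Real.exp |j * ζ|) := hu j
      _ ≤ M * (E * Real.exp (-K * ((j.natAbs - N : ℕ) * ζ))) := by
        rw [habs]; gcongr; exact exp_neg_mul_exp_add_le hc.le _ _
      _ = M * E * q ^ (j.natAbs - N) := by rw [← Real.exp_nat_mul]; ring_nf
  have hsum : Summable fun n : ℕ => M * E * q ^ (n - N) := by
    refine (summable_nat_add_iff N).1 ?_
    simpa using (summable_geometric_of_lt_one (Real.exp_pos _).le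
      (Real.exp_lt_one_iff.2 (neg_lt_zero.2 hKζ))).mul_left (M * E)
  calc ζ * ∑' j : {j : ℤ // (N : ℤ) < |j|}, u j
      ≤ ζ * (2 * ∑' m : ℕ, M * E * q ^ (m + N + 1 - N)) := by
        gcongr; exact tsum_abs_gt_le_two_mul_tsum N hu0 hsum hterm
    _ = 2 * M * E * (ζ * ∑' m : ℕ, q ^ (m + 1)) := by
        simp only [show ∀ m, m + N + 1 - N = m + 1 by omega, tsum_mul_left]; ring
    _ ≤ 2 * M * E * (ζ * (K * ζ)⁻¹) := by gcongr; exact tsum_exp_neg_pow_succ_le hKζ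
    _ = 2 * M / K * E := by field_simp

theorem stmt_18 (d M c : ℝ) (hd : 0 < d) (hM : 0 < M) (hc : 0 < c) (f : ℂ → ℂ)
    (hana : AnalyticOn ℂ f {z : ℂ | |z.im| < d})
    (hbound : ∀ y a : ℝ, |a| < d →
      ‖f ((y : ℂ) + (a : ℂ) * Complex.I)‖ ≤ M * Real.exp (-c * Real.exp |y|)) :
    (∀ d' : ℝ, d' ∈ Set.Ioo 0 d →
      MeasureTheory.Integrable
        (fun y : ℝ => ‖f ((y : ℂ) - (d' : ℂ) * Complex.I)‖) ∧
      MeasureTheory.Integrable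
        (fun y : ℝ => ‖f ((y : ℂ) + (d' : ℂ) * Complex.I)‖)) ∧
    (∀ ζ : ℝ, 0 < ζ → ∀ N : ℕ, 1 ≤ N →
      ζ * ∑' j : {j : ℤ // (N : ℤ) < |j|}, ‖f (((j : ℤ) : ℂ) * (ζ : ℂ))‖
        ≤ (2 * M / c) * Real.exp (-c * Real.exp (N * ζ))) := by
  have hline : ∀ a : ℝ, |a| < d → Integrable fun y : ℝ => ‖f (y + a * I)‖ := fun a ha =>
    have hcont : Continuous fun y : ℝ => f (y + a * I) :=
      hana.continuousOn.comp_continuous (by fun_prop) fun y => by simpa using ha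
    (integrable_of_norm_le_exp_neg_mul_exp_abs hc hcont.aestronglyMeasurable (hbound · a ha)).norm
  refine ⟨fun d' ⟨hd'0, hd'd⟩ => ⟨?_, hline d' (by rwa [abs_of_pos hd'0])⟩,
    fun ζ hζ N _ => ?_⟩
  · simpa [sub_eq_add_neg] using hline (-d') (by rwa [abs_neg, abs_of_pos hd'0])
  have hlattice : ∀ j : ℤ, ‖f (j * ζ)‖ ≤ M * Real.exp (-c * Real.exp |j * ζ|) := fun j => by
    simpa using hbound (j * ζ) 0 (by simpa using hd)
  calc ζ * ∑' j : {j : ℤ // (N : ℤ) < |j|}, ‖f (j * ζ)‖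
      ≤ 2 * M / (c * Real.exp (N * ζ)) * Real.exp (-c * Real.exp (N * ζ)) :=
        mul_tsum_abs_gt_le_of_le_exp_neg_mul_exp hM.le hc hζ N (fun _ => norm_nonneg _) hlattice
    _ ≤ 2 * M / c * Real.exp (-c * Real.exp (N * ζ)) := by
        gcongr; exact le_mul_of_one_le_right hc.le (Real.one_le_exp (by positivity))
end
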